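/- Let δ > 1 be real and y = s + s* − δ^{−1/2} e. Then y is unitarily equivalent to s + s*: there exists a unitary operator U on H such that U ∘ y ∘ U⁻¹ = s + s*. -/

import Mathlib

/-!
With `c = δ^{-1/2} ∈ (0, 1)` and `T = 1 + c s`, the relations `s* s = 1` and `s s* = 1 - e` give
`T* T = (1 + c²) + c (s + s*)` and `T T* = (1 + c²) + c (s + s* - c e)`. Since `‖c s‖ < 1`, `T` is
invertible, and for invertible `T` the unitary `u = T (T* T)^{-1/2}` of its polar decomposition
satisfies `u* (T T*) u = T* T`; cancelling the scalar parts and dividing by `c` gives the claim.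
The argument runs in any unital C⋆-algebra, for any isometry `s`.
-/

open ContinuousLinearMap

noncomputable section

/-- The Hilbert space `ℓ²(ℕ, ℂ)`. -/
abbrev H : Type := lp (fun _ : ℕ => ℂ) 2

/-- The standard orthonormal basis of `ℓ²(ℕ, ℂ)`. -/
def ξ (n : ℕ) : H := lp.single 2 n 1

section CStarAlgebra

variable {A : Type*} [CStarAlgebra A]

theorem norm_le_one_of_star_mul_self_eq_one {v : A} (hv : star v * v = 1) : ‖v‖ ≤ 1 := by
  rcases subsingleton_or_nontrivial A with _ | _
  · simp [Subsingleton.elim v 0]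
  · have hv1 : ‖v‖ * ‖v‖ = 1 := by
      rw [← CStarRing.norm_star_mul_self, hv, CStarRing.norm_one]
    nlinarith [norm_nonneg v]

theorem isUnit_one_add_smul_of_star_mul_self_eq_one {v : A} (hv : star v * v = 1) {c : ℂ}
    (hc : ‖c‖ < 1) : IsUnit (1 + c • v) := by
  have h : ‖-(c • v)‖ < 1 :=
    calc ‖-(c • v)‖ = ‖c‖ * ‖v‖ := by rw [norm_neg, norm_smul]
      _ ≤ ‖c‖ * 1 := by gcongr; exact norm_le_one_of_star_mul_self_eq_one hv
      _ < 1 := by rwa [mul_one]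
  simpa [sub_eq_add_neg] using isUnit_one_sub_of_norm_lt_one h

theorem IsUnit.exists_unitary_conj_mul_star_eq {T : A} (hT : IsUnit T) :
    ∃ u ∈ unitary A, star u * (T * star T) * u = star T * T := by
  let _ := CStarAlgebra.spectralOrder A
  have := CStarAlgebra.spectralOrderedRing A
  set P := star T * T
  have hP : IsUnit P := hT.star.mul hT
  have hpow (x y : ℝ) : P ^ x * P ^ y = P ^ (x + y) := (CFC.rpow_add hP).symm
  have hP1 : P ^ (1 : ℝ) = P := CFC.rpow_one P
  set R := P ^ (-(1 / 2) : ℝ)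
  have hR : star R = R := (IsSelfAdjoint.of_nonneg CFC.rpow_nonneg).star_eq
  have hstar : star (T * R) = R * star T := by rw [star_mul, hR]
  refine ⟨T * R, (hT.mul (hP.cfcRpow _)).mem_unitary_of_star_mul_self ?_, ?_⟩
  · calc star (T * R) * (T * R) = R * P ^ (1 : ℝ) * R := by
          rw [hstar, hP1]; simp only [P, mul_assoc]
      _ = 1 := by rw [hpow, hpow, ← CFC.rpow_zero P]; norm_num
  · calc star (T * R) * (T * star T) * (T * R) = R * P ^ (1 : ℝ) * P ^ (1 : ℝ) * R := by
          rw [hstar, hP1]; simp only [P, mul_assoc]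
      _ = P := by rw [hpow, hpow, hpow]; norm_num [hP1]

theorem exists_unitary_conj_add_star_sub_smul {v : A} (hv : star v * v = 1) {c : ℝ}
    (hc : |c| < 1) :
    ∃ u ∈ unitary A, star u * (v + star v - (c : ℂ) • (1 - v * star v)) * u = v + star v := by
  rcases eq_or_ne c 0 with rfl | hc0
  · exact ⟨1, one_mem _, by simp⟩
  set T := 1 + (c : ℂ) • v
  set Y := v + star v - (c : ℂ) • (1 - v * star v)
  have hT : IsUnit T := isUnit_one_add_smul_of_star_mul_self_eq_one hv (by simpa using hc)
  obtain ⟨u, hu, hconj⟩ := hT.exists_unitary_conj_mul_star_eq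
  have hstarT : star T = 1 + (c : ℂ) • star v := by simp [T, star_smul]
  have hTT : star T * T = (1 + (c : ℂ) ^ 2) • 1 + (c : ℂ) • (v + star v) := by
    rw [hstarT]
    simp only [T, mul_add, add_mul, one_mul, mul_one, smul_mul_assoc, mul_smul_comm, hv]
    module
  have hTT' : T * star T = (1 + (c : ℂ) ^ 2) • 1 + (c : ℂ) • Y := by
    rw [hstarT]
    simp only [T, Y, mul_add, add_mul, one_mul, mul_one, smul_mul_assoc, mul_smul_comm]
    module
  have hsmul : (c : ℂ) • (star u * Y * u) = (c : ℂ) • (v + star v) := by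
    refine add_left_cancel (a := (1 + (c : ℂ) ^ 2) • 1) ?_
    calc (1 + (c : ℂ) ^ 2) • 1 + (c : ℂ) • (star u * Y * u) = star u * (T * star T) * u := by
          rw [hTT', mul_add, add_mul, mul_smul_comm, smul_mul_assoc, mul_one,
            Unitary.star_mul_self_of_mem hu, mul_smul_comm, smul_mul_assoc]
      _ = (1 + (c : ℂ) ^ 2) • 1 + (c : ℂ) • (v + star v) := by rw [hconj, hTT]
  exact ⟨u, hu, smul_right_injective A (Complex.ofReal_ne_zero.2 hc0) hsmul⟩

end CStarAlgebra

theorem inner_ξ_left (n : ℕ) (u : H) : inner ℂ (ξ n) u = u n := by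
  simp [ξ, lp.inner_single_left]

theorem inner_ξ_ξ (m n : ℕ) : inner ℂ (ξ m) (ξ n) = if m = n then 1 else 0 := by
  rw [inner_ξ_left]
  simp [ξ, Pi.single_apply]

theorem ext_inner_ξ {u v : H} (h : ∀ n, inner ℂ (ξ n) u = inner ℂ (ξ n) v) : u = v :=
  lp.ext <| funext fun n => by simpa only [inner_ξ_left] using h n

theorem ContinuousLinearMap.ext_ξ {F : Type*} [AddCommMonoid F] [Module ℂ F]
    [TopologicalSpace F] [T2Space F] {f g : H →L[ℂ] F} (h : ∀ n, f (ξ n) = g (ξ n)) : f = g :=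
  lp.ext_continuousLinearMap ENNReal.ofNat_ne_top fun n => ContinuousLinearMap.ext fun a => by
    have hsingle : lp.single 2 n a = a • ξ n := by simp [ξ, ← lp.single_smul]
    simp [hsingle, h]

section Shift

variable {s : H →L[ℂ] H}

theorem adjoint_shift_ξ_zero (hs : ∀ n, s (ξ n) = ξ (n + 1)) : adjoint s (ξ 0) = 0 :=
  ext_inner_ξ fun m => by simp [adjoint_inner_right, hs, inner_ξ_ξ]

theorem adjoint_shift_ξ_succ (hs : ∀ n, s (ξ n) = ξ (n + 1)) (n : ℕ) :
    adjoint s (ξ (n + 1)) = ξ n :=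
  ext_inner_ξ fun m => by simp [adjoint_inner_right, hs, inner_ξ_ξ]

theorem adjoint_shift_mul_self (hs : ∀ n, s (ξ n) = ξ (n + 1)) : adjoint s * s = 1 :=
  ContinuousLinearMap.ext_ξ fun n => by simp [hs, adjoint_shift_ξ_succ hs]

theorem shift_mul_adjoint (hs : ∀ n, s (ξ n) = ξ (n + 1)) {e : H →L[ℂ] H}
    (he : ∀ v : H, e v = inner ℂ (ξ 0) v • ξ 0) :
    s * adjoint s = 1 - e :=
  ContinuousLinearMap.ext_ξ fun n => by
    cases n with
    | zero => simp [he, adjoint_shift_ξ_zero hs, inner_ξ_ξ, -inner_self_eq_norm_sq_to_K]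
    | succ n => simp [he, adjoint_shift_ξ_succ hs, hs, inner_ξ_ξ]

end Shift

/-- If `δ > 1`, `s` is the unilateral shift on `ℓ²(ℕ,ℂ)` and `e` is the orthogonal
projection onto the span of `ξ 0`, then `y = s + s* − δ^{-1/2} e` is unitarily
equivalent to `s + s*`: there is a unitary `U` on `H` with `U ∘ y ∘ U⁻¹ = s + s*`. -/
theorem stmt4 (δ : ℝ) (hδ : 1 < δ) (s e : H →L[ℂ] H)
    (hs : ∀ n : ℕ, s (ξ n) = ξ (n + 1))
    (he : ∀ v : H, e v = (inner ℂ (ξ 0) v : ℂ) • ξ 0) :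
    ∃ U : H ≃ₗᵢ[ℂ] H, ∀ v : H,
      U ((s + adjoint s - (((Real.sqrt δ)⁻¹ : ℝ) : ℂ) • e) (U.symm v))
        = (s + adjoint s) v := by
  have hc : |(Real.sqrt δ)⁻¹| < 1 := by
    rw [abs_inv, abs_of_nonneg (Real.sqrt_nonneg δ)]
    exact inv_lt_one_of_one_lt₀ (Real.lt_sqrt zero_le_one |>.2 (by simpa using hδ))
  obtain ⟨u, hu, hconj⟩ := exists_unitary_conj_add_star_sub_smul (adjoint_shift_mul_self hs) hc
  simp only [star_eq_adjoint, shift_mul_adjoint hs he, sub_sub_cancel] at hconj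
  exact ⟨(Unitary.linearIsometryEquiv (𝕜 := ℂ) ⟨u, hu⟩).symm, DFunLike.congr_fun hconj⟩
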